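/- Let R = ℂ[x1, x2, x3] be the polynomial ring in three variables over the complex numbers, equipped with a Poisson bracket satisfying {x1,x2} = −x1·x2, {x1,x3} = −2·x1·x3, and {x2,x3} = −x2·x3. Then the prime ideals of R that are Poisson ideals are exactly the following: the maximal ideals ⟨x1 − α, x2, x3⟩, ⟨x1, x2 − β, x3⟩, ⟨x1, x2, x3 − γ⟩ for α, β, γ ∈ ℂ; the height two primes ⟨x1, x2⟩, ⟨x1, x3⟩, ⟨x2, x3⟩; the height one primes ⟨x1⟩, ⟨x2⟩, ⟨x3⟩, and ⟨x1·x3 − λ·x2²⟩ for λ ∈ ℂ \ {0}; and the zero ideal ⟨0⟩. -/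

import Mathlib

/-- A Poisson bracket on a commutative `k`-algebra `R`: a `k`-bilinear,
antisymmetric map satisfying the Jacobi and Leibniz identities. -/
structure PoissonBracket (k : Type*) (R : Type*) [CommRing k] [CommRing R] [Algebra k R] where
  bracket : R → R → R
  add_left : ∀ a b c : R, bracket (a + b) c = bracket a c + bracket b c
  add_right : ∀ a b c : R, bracket a (b + c) = bracket a b + bracket a c
  smul_left : ∀ (t : k) (a b : R), bracket (t • a) b = t • bracket a b
  smul_right : ∀ (t : k) (a b : R), bracket a (t • b) = t • bracket a b
  antisymm : ∀ a b : R, bracket a b = - bracket b a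
  jacobi : ∀ a b c : R,
    bracket a (bracket b c) + bracket b (bracket c a) + bracket c (bracket a b) = 0
  leibniz : ∀ a b c : R, bracket a (b * c) = bracket a b * c + b * bracket a c

/-- An ideal `I` is a Poisson ideal if `{R, I} ⊆ I`. -/
def IsPoissonIdeal {k R : Type*} [CommRing k] [CommRing R] [Algebra k R]
    (B : PoissonBracket k R) (I : Ideal R) : Prop :=
  ∀ a : R, ∀ x ∈ I, B.bracket a x ∈ I

/-- The Poisson core of an ideal `J`: the largest Poisson ideal contained in `J`,
i.e. the sum of all Poisson ideals contained in `J`. -/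
def poissonCore {k R : Type*} [CommRing k] [CommRing R] [Algebra k R]
    (B : PoissonBracket k R) (J : Ideal R) : Ideal R :=
  sSup {I : Ideal R | IsPoissonIdeal B I ∧ I ≤ J}

/-- A Poisson-primitive ideal: the Poisson core of some maximal ideal. -/
def IsPoissonPrimitive {k R : Type*} [CommRing k] [CommRing R] [Algebra k R]
    (B : PoissonBracket k R) (P : Ideal R) : Prop :=
  ∃ m : Ideal R, m.IsMaximal ∧ poissonCore B m = P

/-!
The bracket is log-canonical, `{xᵢ, xⱼ} = qᵢⱼ xᵢ xⱼ`, so `{xᵢ, f} = xᵢ Eᵢ f` where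
`Eᵢ = ∑ⱼ qᵢⱼ xⱼ ∂ⱼ` is an Euler derivation. A prime Poisson ideal `Q` is therefore stable under
`Eᵢ` whenever `xᵢ ∉ Q`.

If two variables lie in `Q`, then `Q` is `⟨xᵢ, xⱼ⟩` or a maximal ideal (this holds for every
prime). Otherwise `Q` is stable under two of the `Eᵢ`, hence under all three since
`q₀ + q₂ = 2 q₁`. Then `Q` is graded for the two weights `(0, 1, 2) = -q₀` and
`(2, 1, 0) = q₂`. Setting `x₁ = x₂ = 1` is injective on each bigraded piece, so over `ℂ` every
nonzero bihomogeneous polynomial is a scalar times a product of variables and conics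
`x₀x₂ - t x₁²` with `t ≠ 0`. Hence a nonzero graded prime contains such a factor. Two different
factors in `Q` would put two variables into `Q`, so `Q` is generated by its unique factor.

Conversely, each ideal in the list is prime, and it is Poisson because every `xᵢ Eᵢ` preserves it.
-/

open MvPolynomial

namespace PoissonBracket

variable {k R : Type*} [CommRing k] [CommRing R] [Algebra k R] (B : PoissonBracket k R)

def hamiltonian (a : R) : Derivation k R R :=
  Derivation.mk' ⟨⟨B.bracket a, B.add_right a⟩, fun t b => B.smul_right t a b⟩
    fun b c => by simp only [LinearMap.coe_mk, AddHom.coe_mk, smul_eq_mul, B.leibniz]; ring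

@[simp]
theorem hamiltonian_apply (a b : R) : B.hamiltonian a b = B.bracket a b := rfl

theorem bracket_zero_right (a : R) : B.bracket a 0 = 0 := (B.hamiltonian a).map_zero

theorem bracket_algebraMap_right (a : R) (t : k) : B.bracket a (algebraMap k R t) = 0 :=
  (B.hamiltonian a).map_algebraMap t

end PoissonBracket

theorem PoissonBracket.bracket_self {K R : Type*} [Field K] [CharZero K] [CommRing R]
    [Algebra K R] (B : PoissonBracket K R) (a : R) : B.bracket a a = 0 := by
  have h : (2 : K) • B.bracket a a = 0 := by
    rw [two_smul]; nth_rw 1 [B.antisymm]; exact neg_add_cancel _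
  exact (smul_eq_zero.mp h).resolve_left two_ne_zero

theorem Ideal.IsPrime.exists_sub_algebraMap_mem {K : Type*} [Field K] [IsAlgClosed K]
    {A : Type*} [CommRing A] [Algebra K A] {Q : Ideal A} (hQ : Q.IsPrime) {x : A}
    {P : Polynomial K} (hP : P ≠ 0) (hx : Polynomial.aeval x P ∈ Q) :
    ∃ γ : K, x - algebraMap K A γ ∈ Q := by
  rw [← Polynomial.C_leadingCoeff_mul_prod_multiset_X_sub_C
    (IsAlgClosed.card_roots_eq_natDegree (p := P)), map_mul, Polynomial.aeval_C,
    map_multiset_prod, Multiset.map_map,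
    Q.unit_mul_mem_iff_mem ((Polynomial.leadingCoeff_ne_zero.mpr hP).isUnit.map _)] at hx
  obtain ⟨y, hy, hyQ⟩ := (hQ.multiset_prod_mem_iff_exists_mem _).mp hx
  obtain ⟨t, -, rfl⟩ := Multiset.mem_map.mp hy
  exact ⟨t, by simpa using hyQ⟩

theorem Derivation.apply_mem_span {R A : Type*} [CommRing R] [CommRing A] [Algebra R A]
    (D : Derivation R A A) {S : Set A} (hS : ∀ g ∈ S, D g ∈ Ideal.span S) {f : A}
    (hf : f ∈ Ideal.span S) : D f ∈ Ideal.span S := by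
  induction hf using Submodule.span_induction with
  | mem g hg => exact hS g hg
  | zero => rw [map_zero]; exact Ideal.zero_mem _
  | add x y _ _ hx hy => rw [map_add]; exact Ideal.add_mem _ hx hy
  | smul a x hx ih =>
    rw [smul_eq_mul, Derivation.leibniz, smul_eq_mul, smul_eq_mul]
    exact Ideal.add_mem _ (Ideal.mul_mem_left _ _ ih) (Ideal.mul_mem_right _ _ hx)

namespace MvPolynomial

variable {σ R : Type*} [CommRing R]

variable (R) in
/-- `∑ i, w i • X i ∂/∂X i`. -/
noncomputable def eulerDerivation (w : σ → R) :
    Derivation R (MvPolynomial σ R) (MvPolynomial σ R) :=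
  mkDerivation R fun i => w i • X i

@[simp]
theorem eulerDerivation_X (w : σ → R) (i : σ) : eulerDerivation R w (X i) = w i • X i :=
  mkDerivation_X R _ i

theorem eulerDerivation_monomial (w : σ → R) (d : σ →₀ ℕ) (c : R) :
    eulerDerivation R w (monomial d c) = Finsupp.weight w d • monomial d c := by
  rw [eulerDerivation, mkDerivation_monomial, Finsupp.weight_apply]
  simp only [Finsupp.sum, Finset.smul_sum, Finset.sum_smul]
  refine Finset.sum_congr rfl fun i hi => ?_
  rw [smul_eq_mul, mul_smul_comm, X, monomial_mul, mul_one,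
    Finsupp.sub_add_single_one_cancel (Finsupp.mem_support_iff.mp hi)]
  simp only [smul_monomial, smul_eq_mul, nsmul_eq_mul]
  ring_nf

theorem coeff_eulerDerivation (w : σ → R) (f : MvPolynomial σ R) (d : σ →₀ ℕ) :
    coeff d (eulerDerivation R w f) = Finsupp.weight w d * coeff d f := by
  classical
  induction f using MvPolynomial.induction_on' with
  | monomial e c =>
    rw [eulerDerivation_monomial, coeff_smul, coeff_monomial, smul_eq_mul]
    split_ifs with h <;> simp [h]
  | add p q hp hq => rw [map_add, coeff_add, coeff_add, hp, hq, mul_add]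

theorem eulerDerivation_mem {I : Ideal (MvPolynomial σ R)} {w : σ → R}
    (h : ∀ i, w i = 0 ∨ X i ∈ I) (f : MvPolynomial σ R) : eulerDerivation R w f ∈ I := by
  induction f using MvPolynomial.induction_on with
  | C c => rw [← algebraMap_eq, Derivation.map_algebraMap]; exact I.zero_mem
  | add p q hp hq => rw [map_add]; exact I.add_mem hp hq
  | mul_X p i hp =>
    rw [Derivation.leibniz, eulerDerivation_X, smul_eq_mul, smul_eq_mul]
    refine I.add_mem ?_ (I.mul_mem_left _ hp)
    rcases h i with hi | hi
    · simp [hi]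
    · exact I.mul_mem_left _ (Submodule.smul_of_tower_mem _ _ hi)

theorem weightedHomogeneousComponent_eulerDerivation (w : σ → ℕ) (n : ℕ)
    (f : MvPolynomial σ R) :
    weightedHomogeneousComponent w n (eulerDerivation R (fun i => (w i : R)) f) =
      (n : R) • weightedHomogeneousComponent w n f := by
  classical
  ext d
  have hw : Finsupp.weight (fun i => (w i : R)) d = (Finsupp.weight w d : R) := by
    simp [Finsupp.weight_apply, Finsupp.sum, nsmul_eq_mul]
  rw [coeff_smul, coeff_weightedHomogeneousComponent, coeff_weightedHomogeneousComponent,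
    coeff_eulerDerivation, hw, smul_eq_mul]
  split_ifs with h <;> simp [h]

theorem sum_weightedHomogeneousComponent_of_subset {M : Type*} [AddCommMonoid M] (w : σ → M)
    (f : MvPolynomial σ R) {s : Finset M}
    (hs : ∀ m ∉ s, weightedHomogeneousComponent w m f = 0) :
    ∑ m ∈ s, weightedHomogeneousComponent w m f = f := by
  rw [← finsum_eq_sum_of_support_subset _ fun m hm => ?_, sum_weightedHomogeneousComponent]
  by_contra h
  exact hm (hs m h)

theorem mem_of_forall_weightedHomogeneousComponent_mem {M : Type*} [AddCommMonoid M]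
    (w : σ → M) {I : Ideal (MvPolynomial σ R)} {f : MvPolynomial σ R}
    (h : ∀ m, weightedHomogeneousComponent w m f ∈ I) : f ∈ I := by
  rw [← sum_weightedHomogeneousComponent w f,
    finsum_eq_sum _ (weightedHomogeneousComponent_finsupp f)]
  exact I.sum_mem fun m _ => h m

theorem IsWeightedHomogeneous.weightedHomogeneousComponent {M M' : Type*} [AddCommMonoid M]
    [AddCommMonoid M'] {w : σ → M} {w' : σ → M'} {f : MvPolynomial σ R} {n : M}
    (hf : IsWeightedHomogeneous w f n) (m : M') :
    IsWeightedHomogeneous w (weightedHomogeneousComponent w' m f) n := by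
  classical
  intro d hd
  rw [coeff_weightedHomogeneousComponent] at hd
  split_ifs at hd
  · exact hf hd
  · exact absurd rfl hd

/-- The Euler derivation of `w` acts on the `n`-th `w`-homogeneous component as multiplication by
`n`, and these eigenvalues are distinct. -/
theorem weightedHomogeneousComponent_mem_of_eulerDerivation_mem {K : Type*} [Field K]
    [CharZero K] {w : σ → ℕ} {I : Ideal (MvPolynomial σ K)}
    (hI : ∀ f ∈ I, eulerDerivation K (fun i => (w i : K)) f ∈ I) {f : MvPolynomial σ K}
    (hf : f ∈ I) (n : ℕ) : weightedHomogeneousComponent w n f ∈ I := by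
  classical
  obtain ⟨s, hs⟩ : ∃ s : Finset ℕ, ∀ m ∉ s, weightedHomogeneousComponent w m f = 0 :=
    ⟨(weightedHomogeneousComponent_finsupp f).toFinset, fun m hm => by
      by_contra h; exact hm ((Set.Finite.mem_toFinset _).mpr h)⟩
  induction s using Finset.induction_on generalizing f n with
  | empty => rw [hs n (Finset.notMem_empty n)]; exact I.zero_mem
  | insert a s ha ih =>
    set g := eulerDerivation K (fun i => (w i : K)) f - (a : K) • f
    have hg : ∀ m, weightedHomogeneousComponent w m g =
        ((m : K) - a) • weightedHomogeneousComponent w m f := fun m => by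
      rw [map_sub, map_smul, weightedHomogeneousComponent_eulerDerivation, sub_smul]
    have hne : ∀ m ≠ a, weightedHomogeneousComponent w m f ∈ I := fun m hm => by
      have hgI : g ∈ I := I.sub_mem (hI f hf) (I.smul_of_tower_mem _ hf)
      have := ih hgI m fun m' hm' => by
        rw [hg]
        by_cases h : m' = a
        · rw [h, sub_self, zero_smul]
        · rw [hs m' (by simp [h, hm']), smul_zero]
      rw [hg] at this
      exact (Submodule.smul_mem_iff _ (sub_ne_zero.mpr (by exact_mod_cast hm))).mp this
    by_cases hn : n = a
    · have hsum := sum_weightedHomogeneousComponent_of_subset w f hs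
      rw [Finset.sum_insert ha, ← hn] at hsum
      rw [eq_sub_of_add_eq hsum]
      exact I.sub_mem hf (I.sum_mem fun m hm => hne m (by rintro rfl; exact ha (hn ▸ hm)))
    · exact hne n hn

theorem sub_aeval_mem {I : Ideal (MvPolynomial σ R)} {v : σ → MvPolynomial σ R}
    (hv : ∀ i, X i - v i ∈ I) (f : MvPolynomial σ R) : f - aeval v f ∈ I := by
  have h : (Ideal.Quotient.mkₐ R I).comp (aeval v) = Ideal.Quotient.mkₐ R I :=
    algHom_ext fun i => by simpa using (Ideal.Quotient.eq.mpr (hv i)).symm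
  exact Ideal.Quotient.eq.mp (congrArg (· f) h).symm

theorem span_eq_ker_aeval {S : Set (MvPolynomial σ R)} {v : σ → MvPolynomial σ R}
    (hS : ∀ g ∈ S, aeval v g = 0) (hv : ∀ i, X i - v i ∈ Ideal.span S) :
    Ideal.span S = RingHom.ker (aeval v) := by
  refine le_antisymm (Ideal.span_le.mpr fun g hg => hS g hg) fun f hf => ?_
  have h := sub_aeval_mem hv f
  rwa [show aeval v f = 0 from hf, sub_zero] at h

theorem isPrime_span_of_aeval_eq_zero [IsDomain R] {S : Set (MvPolynomial σ R)}
    {v : σ → MvPolynomial σ R} (hS : ∀ g ∈ S, aeval v g = 0)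
    (hv : ∀ i, X i - v i ∈ Ideal.span S) : (Ideal.span S).IsPrime := by
  rw [span_eq_ker_aeval hS hv]
  exact RingHom.ker_isPrime _

section Field

variable {K : Type*} [Field K]

theorem ker_eval_le {I : Ideal (MvPolynomial σ K)} {v : σ → K} (hv : ∀ i, X i - C (v i) ∈ I) :
    RingHom.ker (eval v) ≤ I := by
  have hC : ((aeval (R := K) fun i => (C (v i) : MvPolynomial σ K)) : MvPolynomial σ K →+* _) =
      (C : K →+* MvPolynomial σ K).comp (eval v) :=
    ringHom_ext (fun r => by simp) fun i => by simp
  intro f hf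
  have h := sub_aeval_mem hv f
  rwa [← AlgHom.coe_toRingHom, hC, RingHom.comp_apply, show eval v f = 0 from hf, map_zero,
    sub_zero] at h

theorem eq_span_of_X_sub_C_mem {Q : Ideal (MvPolynomial σ K)} (hQ : Q ≠ ⊤)
    {S : Set (MvPolynomial σ K)} (hSQ : Ideal.span S ≤ Q) (v : σ → K)
    (hv : ∀ i, X i - C (v i) ∈ Ideal.span S) : Q = Ideal.span S := by
  have hmax : (RingHom.ker (eval v)).IsMaximal :=
    RingHom.ker_isMaximal_of_surjective _ fun c => ⟨C c, eval_C c⟩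
  have hS : RingHom.ker (eval v) ≤ Ideal.span S := ker_eval_le hv
  rw [← hmax.eq_of_le hQ (hS.trans hSQ), hmax.eq_of_le (ne_top_of_le_ne_top hQ hSQ) hS]

theorem le_or_exists_X_sub_C_mem [IsAlgClosed K] {Q I : Ideal (MvPolynomial σ K)}
    (hQ : Q.IsPrime) (hIQ : I ≤ Q) (k : σ) (hI : ∀ i ≠ k, X i ∈ I) :
    Q ≤ I ∨ ∃ γ, X k - C γ ∈ Q := by
  classical
  refine or_iff_not_imp_left.mpr fun hQI => ?_
  obtain ⟨f, hfQ, hfI⟩ := SetLike.not_le_iff_exists.mp hQI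
  set v : σ → MvPolynomial σ K := fun i => if i = k then X k else 0
  set P : Polynomial K := aeval (fun i => if i = k then (Polynomial.X : Polynomial K) else 0) f
  have hP : aeval v f = Polynomial.aeval (X k) P := by
    rw [← AlgHom.comp_apply]
    congr 1
    exact algHom_ext fun i => by by_cases h : i = k <;> simp [v, h]
  have hdiff := sub_aeval_mem (I := I) (v := v) (fun i => by
    by_cases h : i = k <;> simp [v, h, hI i]) f
  have hP0 : P ≠ 0 := fun h0 => by
    rw [h0, map_zero] at hP
    rw [hP, sub_zero] at hdiff
    exact hfI hdiff
  refine (Ideal.IsPrime.exists_sub_algebraMap_mem hQ hP0 ?_).imp fun γ h => by simpa using h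
  rw [← hP]
  simpa using Q.sub_mem hfQ (hIQ hdiff)

end Field

end MvPolynomial

namespace PoissonBracket

variable {σ R : Type*} [CommRing R] (B : PoissonBracket R (MvPolynomial σ R))

theorem isPoissonIdeal_of_bracket_X_mem {I : Ideal (MvPolynomial σ R)}
    (hI : ∀ i, ∀ f ∈ I, B.bracket (X i) f ∈ I) : IsPoissonIdeal B I := by
  intro a f hf
  induction a using MvPolynomial.induction_on with
  | C c =>
    rw [B.antisymm, ← algebraMap_eq, B.bracket_algebraMap_right, neg_zero]
    exact I.zero_mem
  | add p q hp hq => rw [B.add_left]; exact I.add_mem hp hq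
  | mul_X p i hp =>
    have h : B.bracket (p * X i) f = B.bracket p f * X i + p * B.bracket (X i) f := by
      rw [B.antisymm, B.leibniz, B.antisymm f p, B.antisymm f (X i)]; ring
    rw [h]
    exact I.add_mem (I.mul_mem_right _ hp) (I.mul_mem_left _ (hI i f hf))

variable {B} {q : σ → σ → R} (hq : ∀ i j, B.bracket (X i) (X j) = q i j • (X i * X j))
include hq

theorem bracket_X_eq_mul_eulerDerivation (i : σ) (f : MvPolynomial σ R) :
    B.bracket (X i) f = X i * eulerDerivation R (q i) f := by
  have h : B.hamiltonian (X i) = X i • eulerDerivation R (q i) :=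
    derivation_ext fun j => by
      rw [Derivation.smul_apply, B.hamiltonian_apply, hq, eulerDerivation_X, smul_eq_mul,
        mul_smul_comm]
  rw [← B.hamiltonian_apply, h, Derivation.smul_apply, smul_eq_mul]

theorem eulerDerivation_mem_of_isPoissonIdeal {Q : Ideal (MvPolynomial σ R)} (hQ : Q.IsPrime)
    (hP : IsPoissonIdeal B Q) {i : σ} (hi : X i ∉ Q) {f : MvPolynomial σ R} (hf : f ∈ Q) :
    eulerDerivation R (q i) f ∈ Q := by
  have h := hP (X i) f hf
  rw [bracket_X_eq_mul_eulerDerivation hq] at h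
  exact (hQ.mem_or_mem h).resolve_left hi

theorem isPoissonIdeal_of_eulerDerivation_mem {I : Ideal (MvPolynomial σ R)}
    (hI : ∀ i, X i ∈ I ∨ ∀ f ∈ I, eulerDerivation R (q i) f ∈ I) : IsPoissonIdeal B I := by
  refine B.isPoissonIdeal_of_bracket_X_mem fun i f hf => ?_
  rw [bracket_X_eq_mul_eulerDerivation hq]
  rcases hI i with hi | hi
  · exact I.mul_mem_right _ hi
  · exact I.mul_mem_left _ (hi f hf)

theorem isPoissonIdeal_of_X_mem_of_ne (hq₀ : ∀ i, q i i = 0) {I : Ideal (MvPolynomial σ R)}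
    (k : σ) (hI : ∀ i ≠ k, X i ∈ I) : IsPoissonIdeal B I := by
  classical
  refine isPoissonIdeal_of_eulerDerivation_mem hq fun i => ?_
  by_cases hi : i = k
  · subst hi
    refine Or.inr fun f _ => eulerDerivation_mem (fun j => ?_) f
    by_cases hj : j = i
    · exact Or.inl (hj ▸ hq₀ j)
    · exact Or.inr (hI j hj)
  · exact Or.inl (hI i hi)

theorem isPoissonIdeal_span_singleton {g : MvPolynomial σ R}
    (hg : ∀ i, eulerDerivation R (q i) g ∈ Ideal.span {g}) : IsPoissonIdeal B (Ideal.span {g}) :=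
  isPoissonIdeal_of_eulerDerivation_mem hq fun i => Or.inr fun _ hf =>
    (eulerDerivation R (q i)).apply_mem_span (by simpa using hg i) hf

end PoissonBracket

section Vancliff

local notation "R₃" => MvPolynomial (Fin 3) ℂ

def vancliffMatrix : Fin 3 → Fin 3 → ℂ := ![![0, -1, -2], ![1, 0, -1], ![2, 1, 0]]

theorem bracket_X_X_eq_vancliffMatrix (B : PoissonBracket ℂ R₃)
    (h12 : B.bracket (X 0) (X 1) = -(X 0 * X 1))
    (h13 : B.bracket (X 0) (X 2) = -(2 * (X 0 * X 2)))
    (h23 : B.bracket (X 1) (X 2) = -(X 1 * X 2)) (i j : Fin 3) :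
    B.bracket (X i) (X j) = vancliffMatrix i j • (X i * X j) := by
  fin_cases i <;> fin_cases j <;>
    simp [vancliffMatrix, B.bracket_self, h12, h13, h23, B.antisymm (X 1) (X 0),
      B.antisymm (X 2) (X 0), B.antisymm (X 2) (X 1), neg_smul, two_smul] <;> ring

theorem eulerDerivation_vancliffMatrix_add :
    eulerDerivation ℂ (vancliffMatrix 0) + eulerDerivation ℂ (vancliffMatrix 2) =
      (2 : ℂ) • eulerDerivation ℂ (vancliffMatrix 1) :=
  derivation_ext fun i => by fin_cases i <;> simp [vancliffMatrix, Derivation.smul_apply]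

variable {B : PoissonBracket ℂ R₃}
  (hB : ∀ i j, B.bracket (X i) (X j) = vancliffMatrix i j • (X i * X j))

include hB in
theorem eulerDerivation_vancliffMatrix_mem {Q : Ideal R₃} (hQ : Q.IsPrime)
    (hP : IsPoissonIdeal B Q) (hvar : ∀ i j, i ≠ j → X i ∈ Q → X j ∉ Q) (i : Fin 3) {f : R₃}
    (hf : f ∈ Q) : eulerDerivation ℂ (vancliffMatrix i) f ∈ Q := by
  have hE : ∀ i, X i ∉ Q → eulerDerivation ℂ (vancliffMatrix i) f ∈ Q := fun i hi =>
    PoissonBracket.eulerDerivation_mem_of_isPoissonIdeal hB hQ hP hi hf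
  have hrel := congrArg (· f) eulerDerivation_vancliffMatrix_add
  simp only [Derivation.add_apply, Derivation.smul_apply] at hrel
  by_cases hi : X i ∈ Q
  · obtain rfl | rfl | rfl : i = 0 ∨ i = 1 ∨ i = 2 := by fin_cases i <;> simp
    · rw [eq_sub_of_add_eq hrel]
      exact Q.sub_mem (Q.smul_of_tower_mem _ (hE 1 (hvar 0 1 (by decide) hi)))
        (hE 2 (hvar 0 2 (by decide) hi))
    · refine (Submodule.smul_mem_iff _ (two_ne_zero (α := ℂ))).mp ?_
      rw [← hrel]
      exact Q.add_mem (hE 0 (hvar 1 0 (by decide) hi)) (hE 2 (hvar 1 2 (by decide) hi))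
    · rw [eq_sub_of_add_eq' hrel]
      exact Q.sub_mem (Q.smul_of_tower_mem _ (hE 1 (hvar 2 1 (by decide) hi)))
        (hE 0 (hvar 2 0 (by decide) hi))
  · exact hE i hi

def w₁ : Fin 3 → ℕ := ![0, 1, 2]

def w₂ : Fin 3 → ℕ := ![2, 1, 0]

theorem weight_w₁ (d : Fin 3 →₀ ℕ) : Finsupp.weight w₁ d = d 1 + 2 * d 2 := by
  simp [Finsupp.weight_eq_sum, Fin.sum_univ_three, w₁, mul_comm]

theorem weight_w₂ (d : Fin 3 →₀ ℕ) : Finsupp.weight w₂ d = 2 * d 0 + d 1 := by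
  simp [Finsupp.weight_eq_sum, Fin.sum_univ_three, w₂, mul_comm]

theorem eq_of_weight_eq {d e : Fin 3 →₀ ℕ} (h₁ : Finsupp.weight w₁ d = Finsupp.weight w₁ e)
    (h₂ : Finsupp.weight w₂ d = Finsupp.weight w₂ e) (h₀ : d 0 = e 0) : d = e := by
  rw [weight_w₁, weight_w₁] at h₁
  rw [weight_w₂, weight_w₂] at h₂
  ext i
  fin_cases i <;> simp <;> omega

def IsBihomogeneous (f : R₃) (m n : ℕ) : Prop :=
  IsWeightedHomogeneous w₁ f m ∧ IsWeightedHomogeneous w₂ f n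

noncomputable def bihomogeneousComponent (m n : ℕ) (f : R₃) : R₃ :=
  weightedHomogeneousComponent w₂ n (weightedHomogeneousComponent w₁ m f)

theorem isBihomogeneous_bihomogeneousComponent (m n : ℕ) (f : R₃) :
    IsBihomogeneous (bihomogeneousComponent m n f) m n :=
  ⟨(weightedHomogeneousComponent_isWeightedHomogeneous m f).weightedHomogeneousComponent n,
    weightedHomogeneousComponent_isWeightedHomogeneous n _⟩

theorem mem_of_forall_bihomogeneousComponent_mem {I : Ideal R₃} {f : R₃}
    (h : ∀ m n, bihomogeneousComponent m n f ∈ I) : f ∈ I :=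
  mem_of_forall_weightedHomogeneousComponent_mem w₁ fun m =>
    mem_of_forall_weightedHomogeneousComponent_mem w₂ (h m)

include hB in
theorem bihomogeneousComponent_mem_of_isPoissonIdeal {Q : Ideal R₃} (hQ : Q.IsPrime)
    (hP : IsPoissonIdeal B Q) (hvar : ∀ i j, i ≠ j → X i ∈ Q → X j ∉ Q) {f : R₃} (hf : f ∈ Q)
    (m n : ℕ) : bihomogeneousComponent m n f ∈ Q := by
  have hE := eulerDerivation_vancliffMatrix_mem hB hQ hP hvar
  have h₁ : eulerDerivation ℂ (fun i => (w₁ i : ℂ)) = -eulerDerivation ℂ (vancliffMatrix 0) :=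
    derivation_ext fun i => by fin_cases i <;> simp [w₁, vancliffMatrix]
  have h₂ : eulerDerivation ℂ (fun i => (w₂ i : ℂ)) = eulerDerivation ℂ (vancliffMatrix 2) :=
    derivation_ext fun i => by fin_cases i <;> simp [w₂, vancliffMatrix]
  refine weightedHomogeneousComponent_mem_of_eulerDerivation_mem (fun g hg => ?_)
    (weightedHomogeneousComponent_mem_of_eulerDerivation_mem (fun g hg => ?_) hf m) n
  · rw [h₂]; exact hE 2 hg
  · rw [h₁, Derivation.neg_apply]; exact Q.neg_mem (hE 0 hg)

noncomputable def conic (t : ℂ) : R₃ := X 0 * X 2 - C t * X 1 ^ 2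

theorem isWeightedHomogeneous_conic {w : Fin 3 → ℕ} (hw : w 0 + w 2 = 2 * w 1) (t : ℂ) :
    IsWeightedHomogeneous w (conic t) (2 * w 1) := by
  refine IsWeightedHomogeneous.sub ?_ ?_
  · rw [← hw]; exact (isWeightedHomogeneous_X ℂ w 0).mul (isWeightedHomogeneous_X ℂ w 2)
  · simpa using ((isWeightedHomogeneous_X ℂ w 1).pow 2).C_mul t

theorem isWeightedHomogeneous_C_mul_X_pow_mul_prod_conic {w : Fin 3 → ℕ}
    (hw : w 0 + w 2 = 2 * w 1) (c : ℂ) (i j k : ℕ) (L : Multiset ℂ) :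
    IsWeightedHomogeneous w (C c * X 0 ^ i * X 1 ^ j * X 2 ^ k * (L.map conic).prod)
      (i * w 0 + j * w 1 + k * w 2 + L.card * (2 * w 1)) := by
  have hL : IsWeightedHomogeneous w (L.map conic).prod (L.card * (2 * w 1)) := by
    induction L using Multiset.induction_on with
    | empty => simpa using isWeightedHomogeneous_one ℂ w
    | cons t L ih =>
      rw [Multiset.map_cons, Multiset.prod_cons, Multiset.card_cons, add_mul, one_mul, add_comm]
      exact (isWeightedHomogeneous_conic hw t).mul ih
  have hX := fun a n => (isWeightedHomogeneous_X ℂ w a).pow n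
  simp only [smul_eq_mul] at hX
  exact ((((hX 0 i).C_mul c).mul (hX 1 j)).mul (hX 2 k)).mul hL

theorem isBihomogeneous_C_mul_X_pow_mul_prod_conic (c : ℂ) (i j k : ℕ) (L : Multiset ℂ) :
    IsBihomogeneous (C c * X 0 ^ i * X 1 ^ j * X 2 ^ k * (L.map conic).prod)
      (j + 2 * k + 2 * L.card) (2 * i + j + 2 * L.card) := by
  constructor
  · convert isWeightedHomogeneous_C_mul_X_pow_mul_prod_conic (w := w₁) (by simp [w₁]) c i j k L
      using 1
    simp [w₁]; ring
  · convert isWeightedHomogeneous_C_mul_X_pow_mul_prod_conic (w := w₂) (by simp [w₂]) c i j k L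
      using 1
    simp [w₂]; ring

noncomputable def dehomogenize : R₃ →ₐ[ℂ] Polynomial ℂ := aeval ![Polynomial.X, 1, 1]

theorem coeff_dehomogenize (f : R₃) (a : ℕ) :
    (dehomogenize f).coeff a = ∑ d ∈ f.support with d 0 = a, coeff d f := by
  conv_lhs => rw [f.as_sum]
  rw [map_sum, Polynomial.finsetSum_coeff, Finset.sum_filter]
  refine Finset.sum_congr rfl fun d _ => ?_
  simp [dehomogenize, aeval_monomial, Finsupp.prod_fintype, Fin.prod_univ_three, eq_comm]

theorem exists_mem_support_of_coeff_dehomogenize_ne_zero {f : R₃} {a : ℕ}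
    (h : (dehomogenize f).coeff a ≠ 0) : ∃ d ∈ f.support, d 0 = a := by
  rw [coeff_dehomogenize] at h
  obtain ⟨d, hd, -⟩ := Finset.exists_ne_zero_of_sum_ne_zero h
  exact ⟨d, Finset.mem_filter.mp hd⟩

theorem dehomogenize_C_mul_X_pow_mul_prod_conic (c : ℂ) (i j k : ℕ) (L : Multiset ℂ) :
    dehomogenize (C c * X 0 ^ i * X 1 ^ j * X 2 ^ k * (L.map conic).prod) =
      Polynomial.C c * Polynomial.X ^ i * (L.map fun t => Polynomial.X - Polynomial.C t).prod := by
  simp [dehomogenize, conic, map_multiset_prod, Multiset.map_map, Function.comp_def]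

theorem IsBihomogeneous.coeff_dehomogenize {f : R₃} {m n : ℕ} (hf : IsBihomogeneous f m n)
    {d : Fin 3 →₀ ℕ} (h₁ : Finsupp.weight w₁ d = m) (h₂ : Finsupp.weight w₂ d = n) :
    (dehomogenize f).coeff (d 0) = coeff d f := by
  rw [_root_.coeff_dehomogenize, Finset.sum_eq_single d]
  · intro e he hne
    obtain ⟨he, he0⟩ := Finset.mem_filter.mp he
    have he := mem_support_iff.mp he
    exact absurd (eq_of_weight_eq ((hf.1 he).trans h₁.symm) ((hf.2 he).trans h₂.symm) he0) hne
  · intro hd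
    simpa using hd

theorem IsBihomogeneous.dehomogenize_ne_zero {f : R₃} {m n : ℕ} (hf : IsBihomogeneous f m n)
    (hf0 : f ≠ 0) : dehomogenize f ≠ 0 := by
  obtain ⟨d, hd⟩ := support_nonempty.mpr hf0
  have hd := mem_support_iff.mp hd
  intro h
  have := hf.coeff_dehomogenize (hf.1 hd) (hf.2 hd)
  rw [h, Polynomial.coeff_zero] at this
  exact hd this.symm

theorem IsBihomogeneous.eq_of_dehomogenize_eq {f g : R₃} {m n : ℕ} (hf : IsBihomogeneous f m n)
    (hg : IsBihomogeneous g m n) (h : dehomogenize f = dehomogenize g) : f = g := by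
  ext d
  by_cases hd : Finsupp.weight w₁ d = m ∧ Finsupp.weight w₂ d = n
  · rw [← hf.coeff_dehomogenize hd.1 hd.2, ← hg.coeff_dehomogenize hd.1 hd.2, h]
  · have hzero : ∀ {p : R₃}, IsBihomogeneous p m n → coeff d p = 0 := fun hp => by
      by_contra h0
      exact hd ⟨hp.1 h0, hp.2 h0⟩
    rw [hzero hf, hzero hg]

theorem IsBihomogeneous.exists_eq_C_mul_X_pow_mul_prod_conic {f : R₃} {m n : ℕ}
    (hf : IsBihomogeneous f m n) (hf0 : f ≠ 0) :
    ∃ (c : ℂ) (i j k : ℕ) (L : Multiset ℂ), c ≠ 0 ∧ (∀ t ∈ L, t ≠ 0) ∧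
      f = C c * X 0 ^ i * X 1 ^ j * X 2 ^ k * (L.map conic).prod := by
  set p := dehomogenize f with hp
  obtain ⟨q, hpq, hq⟩ :=
    p.exists_eq_pow_rootMultiplicity_mul_and_not_dvd (hf.dehomogenize_ne_zero hf0) 0
  set r := p.rootMultiplicity 0
  rw [map_zero, sub_zero] at hpq hq
  have hq0 : q ≠ 0 := by rintro rfl; exact hq (dvd_zero _)
  have hq00 : q.coeff 0 ≠ 0 := fun h => hq (Polynomial.X_dvd_iff.mpr h)
  -- the monomials of `f` of largest and of smallest degree in `X 0`
  obtain ⟨d, hd, hd0⟩ := exists_mem_support_of_coeff_dehomogenize_ne_zero (f := f)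
    (a := p.natDegree) (Polynomial.leadingCoeff_ne_zero.mpr (hf.dehomogenize_ne_zero hf0))
  obtain ⟨e, he, he0⟩ := exists_mem_support_of_coeff_dehomogenize_ne_zero (f := f) (a := r) (by
    rwa [← hp, hpq, Polynomial.coeff_X_pow_mul', if_pos le_rfl, Nat.sub_self])
  have hdeg : p.natDegree = r + q.natDegree := by
    rw [hpq, Polynomial.natDegree_mul (pow_ne_zero _ Polynomial.X_ne_zero) hq0,
      Polynomial.natDegree_X_pow]
  have hcard := IsAlgClosed.card_roots_eq_natDegree (p := q)
  have hd₁ := hf.1 (mem_support_iff.mp hd)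
  have hd₂ := hf.2 (mem_support_iff.mp hd)
  have he₁ := hf.1 (mem_support_iff.mp he)
  have he₂ := hf.2 (mem_support_iff.mp he)
  rw [weight_w₁] at hd₁ he₁
  rw [weight_w₂] at hd₂ he₂
  have hH := isBihomogeneous_C_mul_X_pow_mul_prod_conic q.leadingCoeff r (d 1) (e 2) q.roots
  rw [show d 1 + 2 * e 2 + 2 * q.roots.card = m by omega,
    show 2 * r + d 1 + 2 * q.roots.card = n by omega] at hH
  refine ⟨q.leadingCoeff, r, d 1, e 2, q.roots, Polynomial.leadingCoeff_ne_zero.mpr hq0,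
    fun t ht h0 => hq00 ?_, hf.eq_of_dehomogenize_eq hH ?_⟩
  · rw [h0, Polynomial.mem_roots hq0] at ht
    rwa [Polynomial.coeff_zero_eq_eval_zero]
  · rw [dehomogenize_C_mul_X_pow_mul_prod_conic, ← hp, hpq, mul_comm (Polynomial.C _), mul_assoc,
      Polynomial.C_leadingCoeff_mul_prod_multiset_X_sub_C hcard]

theorem eq_of_X_mem_of_X_mem {Q : Ideal R₃} (hQ : Q.IsPrime) {i j : Fin 3} (hij : i ≠ j)
    (hi : X i ∈ Q) (hj : X j ∈ Q) :
    (∃ α : ℂ, Q = Ideal.span {X 0 - C α, X 1, X 2}) ∨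
      (∃ β : ℂ, Q = Ideal.span {X 0, X 1 - C β, X 2}) ∨
      (∃ γ : ℂ, Q = Ideal.span {X 0, X 1, X 2 - C γ}) ∨
      Q = Ideal.span {X 0, X 1} ∨ Q = Ideal.span {X 0, X 2} ∨ Q = Ideal.span {X 1, X 2} := by
  wlog hlt : i < j generalizing i j
  · exact this hij.symm hj hi (lt_of_le_of_ne (not_lt.mp hlt) hij.symm)
  have key : ∀ (k : Fin 3) (S : Set R₃), S ⊆ Q → (∀ i ≠ k, X i ∈ S) →
      Q = Ideal.span S ∨ ∃ γ, X k - C γ ∈ Q := fun k S hSQ hS =>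
    (le_or_exists_X_sub_C_mem hQ (Ideal.span_le.mpr hSQ) k fun i hi =>
      Ideal.subset_span (hS i hi)).imp_left fun h => le_antisymm h (Ideal.span_le.mpr hSQ)
  obtain ⟨rfl, rfl⟩ | ⟨rfl, rfl⟩ | ⟨rfl, rfl⟩ :
      (i = 0 ∧ j = 1) ∨ (i = 0 ∧ j = 2) ∨ (i = 1 ∧ j = 2) := by
    fin_cases i <;> fin_cases j <;> simp at hlt ⊢
  · rcases key 2 {X 0, X 1} (by simp [Set.insert_subset_iff, hi, hj])
      (fun i hi => by fin_cases i <;> simp_all) with h | ⟨γ, hγ⟩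
    · exact Or.inr (Or.inr (Or.inr (Or.inl h)))
    · refine Or.inr (Or.inr (Or.inl ⟨γ, eq_span_of_X_sub_C_mem hQ.ne_top
        (Ideal.span_le.mpr (by simp [Set.insert_subset_iff, *])) ![0, 0, γ] fun i =>
          Ideal.subset_span (by fin_cases i <;> simp)⟩))
  · rcases key 1 {X 0, X 2} (by simp [Set.insert_subset_iff, hi, hj])
      (fun i hi => by fin_cases i <;> simp_all) with h | ⟨β, hβ⟩
    · exact Or.inr (Or.inr (Or.inr (Or.inr (Or.inl h))))
    · refine Or.inr (Or.inl ⟨β, eq_span_of_X_sub_C_mem hQ.ne_top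
        (Ideal.span_le.mpr (by simp [Set.insert_subset_iff, *])) ![0, β, 0] fun i =>
          Ideal.subset_span (by fin_cases i <;> simp)⟩)
  · rcases key 0 {X 1, X 2} (by simp [Set.insert_subset_iff, hi, hj])
      (fun i hi => by fin_cases i <;> simp_all) with h | ⟨α, hα⟩
    · exact Or.inr (Or.inr (Or.inr (Or.inr (Or.inr h))))
    · refine Or.inl ⟨α, eq_span_of_X_sub_C_mem hQ.ne_top
        (Ideal.span_le.mpr (by simp [Set.insert_subset_iff, *])) ![α, 0, 0] fun i =>
          Ideal.subset_span (by fin_cases i <;> simp)⟩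

/-- Up to scalars, the irreducible factors of nonzero bihomogeneous polynomials. -/
def IsBasicFactor (g : R₃) : Prop := g = X 0 ∨ g = X 1 ∨ g = X 2 ∨ ∃ l : ℂ, l ≠ 0 ∧ g = conic l

theorem exists_isBasicFactor_dvd_mem {Q : Ideal R₃} (hQ : Q.IsPrime) {f : R₃} {m n : ℕ}
    (hf : IsBihomogeneous f m n) (hf0 : f ≠ 0) (hfQ : f ∈ Q) :
    ∃ g ∈ Q, IsBasicFactor g ∧ g ∣ f := by
  obtain ⟨c, i, j, k, L, hc, hL, rfl⟩ := hf.exists_eq_C_mul_X_pow_mul_prod_conic hf0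
  set F : Multiset R₃ :=
    .replicate i (X 0) + .replicate j (X 1) + .replicate k (X 2) + L.map conic
  have hF : C c * X 0 ^ i * X 1 ^ j * X 2 ^ k * (L.map conic).prod = C c * F.prod := by
    simp only [F, Multiset.prod_add, Multiset.prod_replicate]; ring
  rw [hF] at hfQ ⊢
  obtain ⟨g, hgF, hgQ⟩ := (hQ.multiset_prod_mem_iff_exists_mem F).mp
    ((Q.unit_mul_mem_iff_mem (hc.isUnit.map C)).mp hfQ)
  refine ⟨g, hgQ, ?_, (Multiset.dvd_prod hgF).mul_left _⟩
  simp only [F, Multiset.mem_add, Multiset.mem_replicate, Multiset.mem_map] at hgF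
  rcases hgF with ((⟨-, rfl⟩ | ⟨-, rfl⟩) | ⟨-, rfl⟩) | ⟨l, hl, rfl⟩
  exacts [Or.inl rfl, Or.inr (Or.inl rfl), Or.inr (Or.inr (Or.inl rfl)),
    Or.inr (Or.inr (Or.inr ⟨l, hL l hl, rfl⟩))]

theorem X_mem_or_X_mem_of_conic_mem {Q : Ideal R₃} (hQ : Q.IsPrime) {l : ℂ} (hl : conic l ∈ Q)
    (h₁ : X 1 ∈ Q) : X 0 ∈ Q ∨ X 2 ∈ Q := by
  have h : X 0 * X 2 = conic l + C l * X 1 * X 1 := by rw [conic]; ring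
  exact hQ.mem_or_mem (h ▸ Q.add_mem hl (Q.mul_mem_left _ h₁))

theorem X_one_mem_of_conic_mem {Q : Ideal R₃} (hQ : Q.IsPrime) {l : ℂ} (hl : l ≠ 0)
    (hlQ : conic l ∈ Q) (h : X 0 ∈ Q ∨ X 2 ∈ Q) : X 1 ∈ Q := by
  have h₀₂ : X 0 * X 2 ∈ Q := h.elim (Q.mul_mem_right _) (Q.mul_mem_left _)
  have := Q.sub_mem h₀₂ hlQ
  rw [conic, sub_sub_cancel, Q.unit_mul_mem_iff_mem (hl.isUnit.map C)] at this
  exact hQ.mem_of_pow_mem 2 this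

theorem exists_X_mem_of_conic_mem_of_X_mem {Q : Ideal R₃} (hQ : Q.IsPrime) {l : ℂ} (hl : l ≠ 0)
    (hlQ : conic l ∈ Q) {i : Fin 3} (hi : X i ∈ Q) : ∃ i j, i ≠ j ∧ X i ∈ Q ∧ X j ∈ Q := by
  have h₀₂ : X 0 ∈ Q ∨ X 2 ∈ Q := by
    fin_cases i
    exacts [Or.inl hi, X_mem_or_X_mem_of_conic_mem hQ hlQ hi, Or.inr hi]
  rcases h₀₂ with h | h
  · exact ⟨0, 1, by decide, h, X_one_mem_of_conic_mem hQ hl hlQ (Or.inl h)⟩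
  · exact ⟨2, 1, by decide, h, X_one_mem_of_conic_mem hQ hl hlQ (Or.inr h)⟩

theorem exists_X_mem_of_isBasicFactor_ne {Q : Ideal R₃} (hQ : Q.IsPrime) {g g' : R₃}
    (hg : IsBasicFactor g) (hg' : IsBasicFactor g') (hgQ : g ∈ Q) (hg'Q : g' ∈ Q)
    (hne : g ≠ g') : ∃ i j, i ≠ j ∧ X i ∈ Q ∧ X j ∈ Q := by
  rcases hg with rfl | rfl | rfl | ⟨l, hl, rfl⟩ <;>
    rcases hg' with rfl | rfl | rfl | ⟨l', hl', rfl⟩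
  all_goals first
    | exact absurd rfl hne
    | exact ⟨_, _, by decide, hgQ, hg'Q⟩
    | exact exists_X_mem_of_conic_mem_of_X_mem hQ hl' hg'Q hgQ
    | exact exists_X_mem_of_conic_mem_of_X_mem hQ hl hgQ hg'Q
    | skip
  have hll' : l' - l ≠ 0 := sub_ne_zero.mpr fun h => hne (h ▸ rfl)
  have := Q.sub_mem hgQ hg'Q
  rw [conic, conic, sub_sub_sub_cancel_left, ← sub_mul, ← map_sub,
    Q.unit_mul_mem_iff_mem (hll'.isUnit.map C)] at this
  exact exists_X_mem_of_conic_mem_of_X_mem hQ hl hgQ (hQ.mem_of_pow_mem 2 this)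

theorem eq_bot_or_eq_span_isBasicFactor {Q : Ideal R₃} (hQ : Q.IsPrime)
    (hgr : ∀ f ∈ Q, ∀ m n, bihomogeneousComponent m n f ∈ Q)
    (hvar : ∀ i j, i ≠ j → X i ∈ Q → X j ∉ Q) :
    Q = ⊥ ∨ ∃ g, IsBasicFactor g ∧ Q = Ideal.span {g} := by
  refine or_iff_not_imp_left.mpr fun hbot => ?_
  obtain ⟨f, hfQ, hf0⟩ := Submodule.exists_mem_ne_zero_of_ne_bot hbot
  obtain ⟨m, n, hmn⟩ : ∃ m n, bihomogeneousComponent m n f ≠ 0 := by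
    by_contra! h
    exact hf0 (by simpa using mem_of_forall_bihomogeneousComponent_mem (I := ⊥) (by simp [h]))
  obtain ⟨g, hgQ, hg, -⟩ := exists_isBasicFactor_dvd_mem hQ
    (isBihomogeneous_bihomogeneousComponent m n f) hmn (hgr f hfQ m n)
  refine ⟨g, hg, le_antisymm (fun f hf => mem_of_forall_bihomogeneousComponent_mem fun m n => ?_)
    (Ideal.span_le.mpr (by simpa using hgQ))⟩
  by_cases h0 : bihomogeneousComponent m n f = 0
  · rw [h0]; exact Ideal.zero_mem _
  obtain ⟨g', hg'Q, hg', hdvd⟩ := exists_isBasicFactor_dvd_mem hQ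
    (isBihomogeneous_bihomogeneousComponent m n f) h0 (hgr f hf m n)
  by_cases hgg' : g' = g
  · exact Ideal.mem_span_singleton.mpr (hgg' ▸ hdvd)
  · obtain ⟨i, j, hij, hi, hj⟩ := exists_X_mem_of_isBasicFactor_ne hQ hg' hg hg'Q hgQ hgg'
    exact absurd hj (hvar i j hij hi)

theorem eulerDerivation_conic {w : Fin 3 → ℂ} (hw : w 0 + w 2 = 2 * w 1) (l : ℂ) :
    eulerDerivation ℂ w (conic l) = (2 * w 1) • conic l := by
  have h : conic l = X 0 * X 2 - l • X 1 ^ 2 := by rw [conic, smul_eq_C_mul]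
  have hw' : C (w 0) + C (w 2) = (2 : R₃) * C (w 1) := by
    rw [← map_add, hw, map_mul, map_ofNat]
  rw [h, map_sub, Derivation.leibniz, Derivation.map_smul, Derivation.leibniz_pow]
  simp only [eulerDerivation_X, smul_eq_C_mul, nsmul_eq_mul, map_mul, map_ofNat]
  linear_combination (X 0 * X 2) * hw'

theorem prime_conic {l : ℂ} (hl : l ≠ 0) : Prime (conic l) := by
  have h : conic l = X 0 * X 2 + -(C l * X 1 ^ 2) := by rw [conic, sub_eq_add_neg]
  rw [h, ← UniqueFactorizationMonoid.irreducible_iff_prime]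
  refine irreducible_mul_X_add _ _ 2 (X_ne_zero 0) (by simp) ?_ ?_
  · rw [vars_neg, vars_C_mul l hl]
    intro h2
    simpa using vars_pow (X 1 : R₃) 2 h2
  · rw [X_prime.irreducible.isRelPrime_iff_not_dvd]
    rintro ⟨g, hg⟩
    exact hl (by simpa using congrArg (eval ![0, 1, 0]) hg)

def vancliffPoissonPrimes : Set (Ideal R₃) :=
  {Q | (∃ α : ℂ, Q = Ideal.span {X 0 - C α, X 1, X 2}) ∨
    (∃ β : ℂ, Q = Ideal.span {X 0, X 1 - C β, X 2}) ∨
    (∃ γ : ℂ, Q = Ideal.span {X 0, X 1, X 2 - C γ}) ∨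
    Q = Ideal.span {X 0, X 1} ∨
    Q = Ideal.span {X 0, X 2} ∨
    Q = Ideal.span {X 1, X 2} ∨
    Q = Ideal.span {(X 0 : R₃)} ∨
    Q = Ideal.span {(X 1 : R₃)} ∨
    Q = Ideal.span {(X 2 : R₃)} ∨
    (∃ l : ℂ, l ≠ 0 ∧ Q = Ideal.span {X 0 * X 2 - C l * (X 1) ^ 2}) ∨
    Q = ⊥}

theorem isPrime_of_mem_vancliffPoissonPrimes {Q : Ideal R₃} (hQ : Q ∈ vancliffPoissonPrimes) :
    Q.IsPrime := by
  rcases hQ with ⟨α, rfl⟩ | ⟨β, rfl⟩ | ⟨γ, rfl⟩ | rfl | rfl | rfl | rfl | rfl | rfl |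
    ⟨l, hl, rfl⟩ | rfl
  · exact isPrime_span_of_aeval_eq_zero (v := ![C α, 0, 0]) (by simp)
      fun i => by fin_cases i <;> simp <;> exact Ideal.subset_span (by simp)
  · exact isPrime_span_of_aeval_eq_zero (v := ![0, C β, 0]) (by simp)
      fun i => by fin_cases i <;> simp <;> exact Ideal.subset_span (by simp)
  · exact isPrime_span_of_aeval_eq_zero (v := ![0, 0, C γ]) (by simp)
      fun i => by fin_cases i <;> simp <;> exact Ideal.subset_span (by simp)
  · exact isPrime_span_of_aeval_eq_zero (v := ![0, 0, X 2]) (by simp)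
      fun i => by fin_cases i <;> simp <;> exact Ideal.subset_span (by simp)
  · exact isPrime_span_of_aeval_eq_zero (v := ![0, X 1, 0]) (by simp)
      fun i => by fin_cases i <;> simp <;> exact Ideal.subset_span (by simp)
  · exact isPrime_span_of_aeval_eq_zero (v := ![X 0, 0, 0]) (by simp)
      fun i => by fin_cases i <;> simp <;> exact Ideal.subset_span (by simp)
  · exact isPrime_span_of_aeval_eq_zero (v := ![0, X 1, X 2]) (by simp) fun i => by
      fin_cases i <;> simp
  · exact isPrime_span_of_aeval_eq_zero (v := ![X 0, 0, X 2]) (by simp) fun i => by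
      fin_cases i <;> simp
  · exact isPrime_span_of_aeval_eq_zero (v := ![X 0, X 1, 0]) (by simp) fun i => by
      fin_cases i <;> simp
  · exact (Ideal.span_singleton_prime (prime_conic hl).ne_zero).mpr (prime_conic hl)
  · exact Ideal.isPrime_bot

include hB in
theorem isPoissonIdeal_of_mem_vancliffPoissonPrimes {Q : Ideal R₃}
    (hQ : Q ∈ vancliffPoissonPrimes) : IsPoissonIdeal B Q := by
  have htwo : ∀ k {I : Ideal R₃}, (∀ i ≠ k, X i ∈ I) → IsPoissonIdeal B I :=
    fun k _ => B.isPoissonIdeal_of_X_mem_of_ne hB (fun i => by fin_cases i <;> rfl) k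
  have hX : ∀ a : Fin 3, IsPoissonIdeal B (Ideal.span {X a}) := fun a =>
    B.isPoissonIdeal_span_singleton hB fun i => by
      rw [eulerDerivation_X]
      exact Submodule.smul_of_tower_mem _ _ (Ideal.mem_span_singleton_self _)
  rcases hQ with ⟨α, rfl⟩ | ⟨β, rfl⟩ | ⟨γ, rfl⟩ | rfl | rfl | rfl | rfl | rfl | rfl |
    ⟨l, hl, rfl⟩ | rfl
  · exact htwo 0 fun i hi => by fin_cases i <;> simp at hi ⊢ <;> exact Ideal.subset_span (by simp)
  · exact htwo 1 fun i hi => by fin_cases i <;> simp at hi ⊢ <;> exact Ideal.subset_span (by simp)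
  · exact htwo 2 fun i hi => by fin_cases i <;> simp at hi ⊢ <;> exact Ideal.subset_span (by simp)
  · exact htwo 2 fun i hi => by fin_cases i <;> simp at hi ⊢ <;> exact Ideal.subset_span (by simp)
  · exact htwo 1 fun i hi => by fin_cases i <;> simp at hi ⊢ <;> exact Ideal.subset_span (by simp)
  · exact htwo 0 fun i hi => by fin_cases i <;> simp at hi ⊢ <;> exact Ideal.subset_span (by simp)
  · exact hX 0
  · exact hX 1
  · exact hX 2
  · refine B.isPoissonIdeal_span_singleton hB fun i => ?_
    change eulerDerivation ℂ _ (conic l) ∈ Ideal.span {conic l}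
    have hw : vancliffMatrix i 0 + vancliffMatrix i 2 = 2 * vancliffMatrix i 1 := by
      fin_cases i <;> simp [vancliffMatrix, Matrix.cons_val]
    rw [eulerDerivation_conic hw]
    exact Submodule.smul_of_tower_mem _ _ (Ideal.mem_span_singleton_self _)
  · intro a f hf
    rw [Ideal.mem_bot.mp hf, B.bracket_zero_right]
    exact Ideal.zero_mem _

include hB in
theorem mem_vancliffPoissonPrimes {Q : Ideal R₃} (hQ : Q.IsPrime) (hP : IsPoissonIdeal B Q) :
    Q ∈ vancliffPoissonPrimes := by
  by_cases hvar : ∃ i j, i ≠ j ∧ X i ∈ Q ∧ X j ∈ Q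
  · obtain ⟨i, j, hij, hi, hj⟩ := hvar
    have := eq_of_X_mem_of_X_mem hQ hij hi hj
    simp only [vancliffPoissonPrimes, Set.mem_ofPred_eq]
    tauto
  push Not at hvar
  rcases eq_bot_or_eq_span_isBasicFactor hQ
      (fun f hf => bihomogeneousComponent_mem_of_isPoissonIdeal hB hQ hP hvar hf) hvar with
    rfl | ⟨g, hg, rfl⟩
  · simp [vancliffPoissonPrimes]
  rcases hg with rfl | rfl | rfl | ⟨l, hl, rfl⟩
  · simp [vancliffPoissonPrimes]
  · simp [vancliffPoissonPrimes]
  · simp [vancliffPoissonPrimes]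
  · iterate 9 right
    exact Or.inl ⟨l, hl, rfl⟩

end Vancliff

open MvPolynomial in
/-- the classification of prime Poisson ideals of `ℂ[x₁,x₂,x₃]` with
`{x₁,x₂} = -x₁x₂`, `{x₁,x₃} = -2x₁x₃`, `{x₂,x₃} = -x₂x₃` (Vancliff's example). -/
theorem poisson_primes_of_vancliff_example
    (B : PoissonBracket ℂ (MvPolynomial (Fin 3) ℂ))
    (h12 : B.bracket (X 0) (X 1) = -(X 0 * X 1))
    (h13 : B.bracket (X 0) (X 2) = -(2 * (X 0 * X 2)))
    (h23 : B.bracket (X 1) (X 2) = -(X 1 * X 2))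
    (Q : Ideal (MvPolynomial (Fin 3) ℂ)) :
    (Q.IsPrime ∧ IsPoissonIdeal B Q) ↔
      ((∃ α : ℂ, Q = Ideal.span {X 0 - C α, X 1, X 2}) ∨
       (∃ β : ℂ, Q = Ideal.span {X 0, X 1 - C β, X 2}) ∨
       (∃ γ : ℂ, Q = Ideal.span {X 0, X 1, X 2 - C γ}) ∨
       Q = Ideal.span {X 0, X 1} ∨
       Q = Ideal.span {X 0, X 2} ∨
       Q = Ideal.span {X 1, X 2} ∨
       Q = Ideal.span {(X 0 : MvPolynomial (Fin 3) ℂ)} ∨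
       Q = Ideal.span {(X 1 : MvPolynomial (Fin 3) ℂ)} ∨
       Q = Ideal.span {(X 2 : MvPolynomial (Fin 3) ℂ)} ∨
       (∃ l : ℂ, l ≠ 0 ∧ Q = Ideal.span {X 0 * X 2 - C l * (X 1) ^ 2}) ∨
       Q = ⊥) := by
  have hB := bracket_X_X_eq_vancliffMatrix B h12 h13 h23
  exact ⟨fun ⟨hQ, hP⟩ => mem_vancliffPoissonPrimes hB hQ hP, fun hQ =>
    ⟨isPrime_of_mem_vancliffPoissonPrimes hQ, isPoissonIdeal_of_mem_vancliffPoissonPrimes hB hQ⟩⟩
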